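/- arXiv:2011.11713 — 2 statements merged into one kernel-verified Lean document; each statement's English description precedes it below -/
import Mathlib

section
/- Let d, k, m be natural numbers with 2k ≤ d, let W be a real m×d matrix, and let G : ℝ^m → ℝ be any function. Write each input x ∈ ℝ^d as x = (u, v, w) with u ∈ ℝ^k the first k coordinates, v ∈ ℝ^k the next k coordinates, and w ∈ ℝ^{d−2k} the remaining coordinates, and define the network prediction f̂(u, v, w) = G(W·(u, v, w)). If f̂ is partially exchangeable, i.e. f̂(u, v, w) = f̂(v, u, w) for all u, v ∈ ℝ^k and w ∈ ℝ^{d−2k}, then for every x ∈ ℝ^k the vector z ∈ ℝ^m with components z_j = Σ_{i=1}^{k} (W_{j,i} − W_{j,k+i}) x_i satisfies G(z) = G(−z); that is, G is even on the linear span of the differences of the u-block and v-block columns of W. -/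
/-!
Feeding `(x, -x, 0)` and `(-x, x, 0)` to the network, the first layer outputs `z` and `-z`
respectively, where `z = (W_u - W_v) x` and `W_u`, `W_v` are the column blocks of `W`
acting on `u` and `v`; these two inputs are exchanged by swapping `u` and `v`.
-/

namespace Matrix

variable {R ι : Type*}

theorem mulVec_finAppend [NonUnitalNonAssocSemiring R] {a b : ℕ}
    (W : Matrix ι (Fin (a + b)) R) (u : Fin a → R) (v : Fin b → R) :
    W *ᵥ Fin.append u v = W.submatrix id (Fin.castAdd b) *ᵥ u + W.submatrix id (Fin.natAdd a) *ᵥ v := by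
  ext j
  simp [mulVec, dotProduct, Fin.sum_univ_add]

theorem mulVec_finAppend_finAppend_zero [NonUnitalNonAssocSemiring R] {k r : ℕ}
    (W : Matrix ι (Fin (k + k + r)) R) (u v : Fin k → R) :
    W *ᵥ Fin.append (Fin.append u v) (0 : Fin r → R) =
      W.submatrix id (Fin.castAdd r ∘ Fin.castAdd k) *ᵥ u +
        W.submatrix id (Fin.castAdd r ∘ Fin.natAdd k) *ᵥ v := by
  rw [mulVec_finAppend, mulVec_zero, add_zero, mulVec_finAppend, submatrix_submatrix,
    submatrix_submatrix]
  rfl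

theorem mulVec_add_mulVec_neg [NonUnitalNonAssocRing R] {n : Type*} [Fintype n]
    (A B : Matrix ι n R) (x : n → R) :
    A *ᵥ x + B *ᵥ (-x) = (A - B) *ᵥ x := by
  rw [mulVec_neg, sub_mulVec, sub_eq_add_neg]

end Matrix

open Matrix in
/-- **Evenness step in Theorem 1.**
With the input dimension written as `d = k + k + r` (so `2k ≤ d`), the network
prediction is `f̂ (u, v, w) = G (W.mulVec (u, v, w))`.  If `f̂` is partially
exchangeable in the two `k`-blocks, then for every `x ∈ ℝ^k` the vector
`z_j = ∑ i, (W j i − W j (k+i)) x i` satisfies `G z = G (−z)`. -/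
theorem evenness_on_span_of_partially_exchangeable
    (k r m : ℕ) (W : Matrix (Fin m) (Fin (k + k + r)) ℝ)
    (G : (Fin m → ℝ) → ℝ)
    (hex : ∀ (u v : Fin k → ℝ) (w : Fin r → ℝ),
      G (W.mulVec (Fin.append (Fin.append u v) w)) =
        G (W.mulVec (Fin.append (Fin.append v u) w)))
    (x : Fin k → ℝ) :
    G (fun j => ∑ i : Fin k,
        (W j (Fin.castAdd r (Fin.castAdd k i)) - W j (Fin.castAdd r (Fin.natAdd k i))) * x i) =
      G (-(fun j => ∑ i : Fin k,
        (W j (Fin.castAdd r (Fin.castAdd k i)) - W j (Fin.castAdd r (Fin.natAdd k i))) * x i)) := by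
  set Wu := W.submatrix id (Fin.castAdd r ∘ Fin.castAdd k)
  set Wv := W.submatrix id (Fin.castAdd r ∘ Fin.natAdd k)
  change G ((Wu - Wv) *ᵥ x) = G (-((Wu - Wv) *ᵥ x))
  calc G ((Wu - Wv) *ᵥ x)
      = G (W *ᵥ Fin.append (Fin.append x (-x)) 0) := by
        rw [mulVec_finAppend_finAppend_zero, mulVec_add_mulVec_neg]
    _ = G (W *ᵥ Fin.append (Fin.append (-x) x) 0) := hex _ _ _
    _ = G (-((Wu - Wv) *ᵥ x)) := by
        rw [mulVec_finAppend_finAppend_zero, ← mulVec_neg, ← mulVec_add_mulVec_neg, neg_neg]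
end

section
/- Let d, k, m be natural numbers with 2k ≤ d, let W be a real m×d matrix, and let G : ℝ^m → ℝ. Define f̂(u, v, w) = G(W·(u, v, w)) for u, v ∈ ℝ^k, w ∈ ℝ^{d−2k}. Suppose f̂ is partially exchangeable, i.e. f̂(u, v, w) = f̂(v, u, w) for all u, v, w, and suppose in addition that the linear map ℝ^k → ℝ^m sending x to the vector with components z_j = Σ_{i=1}^{k} (W_{j,i} − W_{j,k+i}) x_i is surjective. Then G is an even function on ℝ^m, i.e. G(z) = G(−z) for all z ∈ ℝ^m. -/
open Matrix

theorem Fin.neg_append {α : Type*} [Neg α] {m n : ℕ} (u : Fin m → α) (v : Fin n → α) :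
    -Fin.append u v = Fin.append (-u) (-v) := by
  ext i
  refine Fin.addCases (fun i => ?_) (fun i => ?_) i <;> simp

theorem Matrix.mulVec_append_append_neg_zero {R ι : Type*} [Ring R] {k r : ℕ}
    (W : Matrix ι (Fin (k + k + r)) R) (u : Fin k → R) :
    W *ᵥ Fin.append (Fin.append u (-u)) 0 =
      fun j => ∑ i : Fin k,
        (W j (Fin.castAdd r (Fin.castAdd k i)) - W j (Fin.castAdd r (Fin.natAdd k i))) * u i := by
  ext j
  simp only [mulVec, dotProduct, Fin.sum_univ_add, Fin.append_left, Fin.append_right,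
    Pi.neg_apply, Pi.zero_apply, mul_zero, mul_neg, Finset.sum_const_zero, add_zero,
    Finset.sum_neg_distrib, ← sub_eq_add_neg, sub_mul, Finset.sum_sub_distrib]

/-- **Theorem 1 of the paper.**
With the input dimension written as `d = k + k + r` (so `2k ≤ d`), the network
prediction is `f̂ (u, v, w) = G (W.mulVec (u, v, w))`.  If `f̂` is partially
exchangeable in the two `k`-blocks, and the linear map
`x ↦ (fun j => ∑ i, (W j i − W j (k+i)) x i)` from `ℝ^k` to `ℝ^m` is surjective
(the non-triviality assumption), then `G` is an even function on `ℝ^m`. -/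
theorem even_of_partially_exchangeable_of_surjective
    (k r m : ℕ) (W : Matrix (Fin m) (Fin (k + k + r)) ℝ)
    (G : (Fin m → ℝ) → ℝ)
    (hex : ∀ (u v : Fin k → ℝ) (w : Fin r → ℝ),
      G (W.mulVec (Fin.append (Fin.append u v) w)) =
        G (W.mulVec (Fin.append (Fin.append v u) w)))
    (hsurj : Function.Surjective
      (fun x : Fin k → ℝ => (fun j => ∑ i : Fin k,
        (W j (Fin.castAdd r (Fin.castAdd k i)) - W j (Fin.castAdd r (Fin.natAdd k i))) * x i :
        Fin m → ℝ))) :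
    ∀ z : Fin m → ℝ, G z = G (-z) := by
  intro z
  obtain ⟨u, rfl⟩ := hsurj z
  have hswap : Fin.append (Fin.append (-u) u) (0 : Fin r → ℝ) =
      -Fin.append (Fin.append u (-u)) 0 := by
    simp only [Fin.neg_append, neg_neg, neg_zero]
  have hG := hex u (-u) 0
  rwa [hswap, mulVec_neg, mulVec_append_append_neg_zero] at hG
end
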